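/- Suppose R ⪰ 0, γ ≥ 0, and set P_u := diag(−2 I_{n₂}, 2γ² I_{n₂}). If there exist a symmetric X ∈ ℝ^{n×n} with X ≻ 0 and τ > 0 such that L̃(X, τ) ≺ 0 (negative definite), then for every sequence of maps Δ_k : ℝ^{n₂} → ℝ^{n₂} (k ∈ ℕ) satisfying ‖Δ_k(v)‖ ≤ γ ‖v‖ for all v and k, the perturbed lifted closed loop satisfies quadratic performance specified by P̃ with a margin ε > 0 that can be chosen independently of the maps Δ_k: (i) for w̃ ≡ 0 every trajectory satisfies η(k) → 0 as k → ∞; (ii) for every trajectory with η(0) = 0 and square-summable w̃, the series Σ_k (w̃(k), z̃(k))ᵀ P̃ (w̃(k), z̃(k)) converges and its value is ≤ −ε Σ_k ‖w̃(k)‖². -/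

import Mathlib

open Matrix Filter Topology Kronecker

/-- Lifted input matrix `B̃ = [A^{T-1}B, A^{T-2}B, …, B]`. -/
noncomputable def Btil {St : Type*} [Fintype St] [DecidableEq St] {m : ℕ} (T : ℕ) (A : Matrix St St ℝ)
    (B : Matrix St (Fin m) ℝ) : Matrix St (Fin T × Fin m) ℝ :=
  Matrix.of fun i p => (A ^ (T - 1 - (p.1 : ℕ)) * B) i p.2

/-- Lifted output matrix `C̃` with block rows `C, CA, …, CA^{T-1}`. -/
noncomputable def Ctil {St : Type*} [Fintype St] [DecidableEq St] {q : ℕ} (T : ℕ) (A : Matrix St St ℝ)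
    (C : Matrix (Fin q) St ℝ) : Matrix (Fin T × Fin q) St ℝ :=
  Matrix.of fun p j => (C * A ^ (p.1 : ℕ)) p.2 j

/-- Lifted feedthrough matrix `D̃`, block lower triangular with `(i,j)` block `D` if
`i = j`, `C A^{i-j-1} B` if `i > j`, and `0` if `i < j`. -/
noncomputable def Dtil {St : Type*} [Fintype St] [DecidableEq St] {m q : ℕ} (T : ℕ) (A : Matrix St St ℝ)
    (B : Matrix St (Fin m) ℝ) (C : Matrix (Fin q) St ℝ)
    (D : Matrix (Fin q) (Fin m) ℝ) : Matrix (Fin T × Fin q) (Fin T × Fin m) ℝ :=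
  Matrix.of fun p r =>
    if (p.1 : ℕ) = (r.1 : ℕ) then D p.2 r.2
    else if (r.1 : ℕ) < (p.1 : ℕ) then
      (C * A ^ ((p.1 : ℕ) - (r.1 : ℕ) - 1) * B) p.2 r.2
    else 0

/-- The lifted performance matrix `P̃ = [[I_T ⊗ Q, I_T ⊗ S], [I_T ⊗ Sᵀ, I_T ⊗ R]]`. -/
noncomputable def Ptil {m q : ℕ} (T : ℕ) (Q : Matrix (Fin m) (Fin m) ℝ)
    (S : Matrix (Fin m) (Fin q) ℝ) (R : Matrix (Fin q) (Fin q) ℝ) :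
    Matrix ((Fin T × Fin m) ⊕ (Fin T × Fin q)) ((Fin T × Fin m) ⊕ (Fin T × Fin q)) ℝ :=
  Matrix.fromBlocks ((1 : Matrix (Fin T) (Fin T) ℝ) ⊗ₖ Q)
    ((1 : Matrix (Fin T) (Fin T) ℝ) ⊗ₖ S)
    ((1 : Matrix (Fin T) (Fin T) ℝ) ⊗ₖ Sᵀ)
    ((1 : Matrix (Fin T) (Fin T) ℝ) ⊗ₖ R)

/-- The uncertainty input matrix `B_u = [0; A_c]`, where `A_c` is the lower-right
(controller) block of `A`. -/
noncomputable def Bu {n₁ n₂ : ℕ} (A : Matrix (Fin n₁ ⊕ Fin n₂) (Fin n₁ ⊕ Fin n₂) ℝ) :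
    Matrix (Fin n₁ ⊕ Fin n₂) (Fin n₂) ℝ :=
  Matrix.of fun i j =>
    Sum.elim (fun _ : Fin n₁ => (0 : ℝ)) (fun i₂ => A (Sum.inr i₂) (Sum.inr j)) i

/-- The uncertainty output matrix `C_u = [0, I]` selecting the controller state. -/
noncomputable def Cu (n₁ n₂ : ℕ) : Matrix (Fin n₂) (Fin n₁ ⊕ Fin n₂) ℝ :=
  Matrix.of fun i j =>
    Sum.elim (fun _ : Fin n₁ => (0 : ℝ)) (fun j₂ => if i = j₂ then 1 else 0) j

/-- The lifted uncertainty input matrix `B̃_u = A^{T-1} B_u`. -/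
noncomputable def Butil {n₁ n₂ : ℕ} (T : ℕ)
    (A : Matrix (Fin n₁ ⊕ Fin n₂) (Fin n₁ ⊕ Fin n₂) ℝ) :
    Matrix (Fin n₁ ⊕ Fin n₂) (Fin n₂) ℝ :=
  A ^ (T - 1) * Bu A

/-- The lifted uncertainty feedthrough matrix `D̃_u` with block rows
`0, C B_u, C A B_u, …, C A^{T-2} B_u`. -/
noncomputable def Dutil {n₁ n₂ q : ℕ} (T : ℕ)
    (A : Matrix (Fin n₁ ⊕ Fin n₂) (Fin n₁ ⊕ Fin n₂) ℝ)
    (C : Matrix (Fin q) (Fin n₁ ⊕ Fin n₂) ℝ) : Matrix (Fin T × Fin q) (Fin n₂) ℝ :=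
  Matrix.of fun p j =>
    if (p.1 : ℕ) = 0 then 0 else (C * A ^ ((p.1 : ℕ) - 1) * Bu A) p.2 j

/-- The robust LMI matrix `L̃(X, τ)` combining the lifted dynamics, the lifted
performance multiplier `P̃`, and the uncertainty multiplier `τ P_u`. -/
noncomputable def Ltil {n₁ n₂ m q : ℕ} (T : ℕ)
    (A : Matrix (Fin n₁ ⊕ Fin n₂) (Fin n₁ ⊕ Fin n₂) ℝ)
    (B : Matrix (Fin n₁ ⊕ Fin n₂) (Fin m) ℝ)
    (C : Matrix (Fin q) (Fin n₁ ⊕ Fin n₂) ℝ) (D : Matrix (Fin q) (Fin m) ℝ)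
    (Q : Matrix (Fin m) (Fin m) ℝ) (S : Matrix (Fin m) (Fin q) ℝ)
    (R : Matrix (Fin q) (Fin q) ℝ)
    (Pu : Matrix (Fin n₂ ⊕ Fin n₂) (Fin n₂ ⊕ Fin n₂) ℝ)
    (X : Matrix (Fin n₁ ⊕ Fin n₂) (Fin n₁ ⊕ Fin n₂) ℝ) (τ : ℝ) :
    Matrix (((Fin n₁ ⊕ Fin n₂)) ⊕ ((Fin T × Fin m) ⊕ Fin n₂))
      (((Fin n₁ ⊕ Fin n₂)) ⊕ ((Fin T × Fin m) ⊕ Fin n₂)) ℝ :=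
  (Matrix.fromBlocks (1 : Matrix (Fin n₁ ⊕ Fin n₂) (Fin n₁ ⊕ Fin n₂) ℝ) 0 (A ^ T) (Matrix.fromCols (Btil T A B) (Butil T A)))ᵀ *
      Matrix.fromBlocks (-X) 0 0 X *
      Matrix.fromBlocks (1 : Matrix (Fin n₁ ⊕ Fin n₂) (Fin n₁ ⊕ Fin n₂) ℝ) 0 (A ^ T) (Matrix.fromCols (Btil T A B) (Butil T A))
    + (Matrix.fromBlocks 0 (Matrix.fromCols (1 : Matrix (Fin T × Fin m) (Fin T × Fin m) ℝ) 0) (Ctil T A C)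
        (Matrix.fromCols (Dtil T A B C D) (Dutil T A C)))ᵀ *
      Ptil T Q S R *
      Matrix.fromBlocks 0 (Matrix.fromCols (1 : Matrix (Fin T × Fin m) (Fin T × Fin m) ℝ) 0) (Ctil T A C)
        (Matrix.fromCols (Dtil T A B C D) (Dutil T A C))
    + (Matrix.fromBlocks 0 (Matrix.fromCols (0 : Matrix (Fin n₂) (Fin T × Fin m) ℝ) 1) (Cu n₁ n₂) 0)ᵀ *
      (τ • Pu) *
      Matrix.fromBlocks 0 (Matrix.fromCols (0 : Matrix (Fin n₂) (Fin T × Fin m) ℝ) 1) (Cu n₁ n₂) 0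

/-- Trajectories of the perturbed lifted closed loop
`η(k+1) = Ã η(k) + B̃ w̃(k) + B̃_u Δ_k(C_u η(k))`,
`z̃(k) = C̃ η(k) + D̃ w̃(k) + D̃_u Δ_k(C_u η(k))`. -/
def PerturbedTraj {n₁ n₂ m q : ℕ} (T : ℕ)
    (A : Matrix (Fin n₁ ⊕ Fin n₂) (Fin n₁ ⊕ Fin n₂) ℝ)
    (B : Matrix (Fin n₁ ⊕ Fin n₂) (Fin m) ℝ)
    (C : Matrix (Fin q) (Fin n₁ ⊕ Fin n₂) ℝ) (D : Matrix (Fin q) (Fin m) ℝ)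
    (Δ : ℕ → (Fin n₂ → ℝ) → (Fin n₂ → ℝ))
    (η : ℕ → (Fin n₁ ⊕ Fin n₂) → ℝ) (w : ℕ → Fin T × Fin m → ℝ)
    (z : ℕ → Fin T × Fin q → ℝ) : Prop :=
  ∀ k : ℕ,
    η (k + 1) = (A ^ T).mulVec (η k) + (Btil T A B).mulVec (w k) +
        (Butil T A).mulVec (Δ k ((Cu n₁ n₂).mulVec (η k))) ∧
    z k = (Ctil T A C).mulVec (η k) + (Dtil T A B C D).mulVec (w k) +
        (Dutil T A C).mulVec (Δ k ((Cu n₁ n₂).mulVec (η k)))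

/-!
Evaluating `L̃(X, τ) ≺ -ε I` at `ζ_k = (η_k, w̃_k, Δ_k(C_u η_k))` gives the dissipation inequality
`V(η_{k+1}) - V(η_k) + s_k ≤ -ε ‖ζ_k‖²` for the storage `V(η) = ηᵀ X η` and the supply
`s_k = (w̃_k, z̃_k)ᵀ P̃ (w̃_k, z̃_k)`: the sector bound `‖Δ_k v‖ ≤ γ ‖v‖` makes the multiplier term
`τ (Δ_k(C_u η_k), C_u η_k)ᵀ P_u (Δ_k(C_u η_k), C_u η_k)` nonnegative.

For `w̃ = 0` the supply is `z̃ᵀ (I ⊗ R) z̃ ≥ 0`, so `V` drops by at least `ε ‖η_k‖²` per step and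
`∑ ‖η_k‖²` converges. For `η(0) = 0`, summing gives `∑ s_k ≤ -ε ∑ ‖ζ_k‖² ≤ -ε ∑ ‖w̃_k‖²`; since
`R ⪰ 0`, the supply is also bounded below by `-(ε/2) ‖ζ_k‖² - K ‖w̃_k‖²`, which forces `∑ ‖ζ_k‖²`,
and with it `∑ s_k`, to converge.
-/

section DotProduct

variable {ι : Type*} [Fintype ι]

lemma dotProduct_self_nonneg (x : ι → ℝ) : 0 ≤ x ⬝ᵥ x :=
  Fintype.sum_nonneg fun i => mul_self_nonneg (x i)

lemma sq_le_dotProduct_self (x : ι → ℝ) (i : ι) : x i ^ 2 ≤ x ⬝ᵥ x := by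
  simpa [dotProduct, sq] using
    Finset.single_le_sum (fun j _ => mul_self_nonneg (x j)) (Finset.mem_univ i)

lemma exists_abs_dotProduct_mulVec_le (K : Matrix ι ι ℝ) :
    ∃ c ≥ 0, ∀ t > 0, ∀ x y : ι → ℝ, |x ⬝ᵥ K *ᵥ y| ≤ c * (t * (x ⬝ᵥ x) + (y ⬝ᵥ y) / t) := by
  refine ⟨∑ i, ∑ j, |K i j|, by positivity, fun t ht x y => ?_⟩
  have hxy (i j : ι) : |x i| * |y j| ≤ t * (x ⬝ᵥ x) + (y ⬝ᵥ y) / t := by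
    have hx := sq_le_dotProduct_self x i
    have hy := div_le_div_of_nonneg_right (sq_le_dotProduct_self y j) ht.le
    have hamgm : 2 * (|x i| * |y j|) ≤ t * x i ^ 2 + y j ^ 2 / t := by
      rw [← sq_abs (x i), ← sq_abs (y j)]
      field_simp
      nlinarith [sq_nonneg (t * |x i| - |y j|)]
    nlinarith [abs_nonneg (x i), abs_nonneg (y j), sq_nonneg (x i), sq_nonneg (y j)]
  calc |x ⬝ᵥ K *ᵥ y| = |∑ i, ∑ j, x i * K i j * y j| := by
        simp [dotProduct, mulVec, Finset.mul_sum, mul_assoc]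
    _ ≤ ∑ i, ∑ j, |K i j| * (|x i| * |y j|) := by
        refine (Finset.abs_sum_le_sum_abs _ _).trans (Finset.sum_le_sum fun i _ => ?_)
        refine (Finset.abs_sum_le_sum_abs _ _).trans (le_of_eq ?_)
        simp only [abs_mul]
        exact Finset.sum_congr rfl fun j _ => by ring
    _ ≤ ∑ i, ∑ j, |K i j| * (t * (x ⬝ᵥ x) + (y ⬝ᵥ y) / t) := by
        gcongr with i _ j _
        exact hxy i j
    _ = _ := by simp [Finset.sum_mul]

lemma exists_neg_le_dotProduct_add_mulVec_add (K : Matrix ι ι ℝ) {δ : ℝ} (hδ : 0 < δ) :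
    ∃ C ≥ 0, ∀ a b : ι → ℝ, 0 ≤ a ⬝ᵥ K *ᵥ a →
      -(δ * (a ⬝ᵥ a) + C * (b ⬝ᵥ b)) ≤ (a + b) ⬝ᵥ K *ᵥ (a + b) := by
  obtain ⟨c, hc, hK⟩ := exists_abs_dotProduct_mulVec_le K
  set t := δ / (2 * c + 1)
  have ht : 0 < t := by positivity
  have hct : 2 * c * t ≤ δ := by
    rw [show 2 * c * t = δ * (2 * c / (2 * c + 1)) by ring]
    exact mul_le_of_le_one_right hδ.le ((div_le_one (by positivity)).2 (by linarith))
  clear_value t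
  refine ⟨2 * c / t + 2 * c, by positivity, fun a b ha => ?_⟩
  have hab := (abs_le.1 (hK t ht a b)).1
  have hba := (abs_le.1 (hK t⁻¹ (inv_pos.2 ht) b a)).1
  rw [div_inv_eq_mul] at hba
  have hbb := (abs_le.1 (hK 1 one_pos b b)).1
  have haa : 2 * c * t * (a ⬝ᵥ a) ≤ δ * (a ⬝ᵥ a) :=
    mul_le_mul_of_nonneg_right hct (dotProduct_self_nonneg a)
  have hexp : (a + b) ⬝ᵥ K *ᵥ (a + b)
      = a ⬝ᵥ K *ᵥ a + a ⬝ᵥ K *ᵥ b + b ⬝ᵥ K *ᵥ a + b ⬝ᵥ K *ᵥ b := by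
    simp only [mulVec_add, dotProduct_add, add_dotProduct]; ring
  rw [hexp]
  linear_combination ha + hab + hba + hbb + haa

lemma Matrix.PosDef.exists_pos_mul_dotProduct_self_le [DecidableEq ι] {M : Matrix ι ι ℝ}
    (hM : M.PosDef) : ∃ ε > 0, ∀ x : ι → ℝ, ε * (x ⬝ᵥ x) ≤ x ⬝ᵥ M *ᵥ x := by
  open MatrixOrder in
  obtain ⟨ε, hε, hεM⟩ : ∃ ε > 0, algebraMap ℝ (Matrix ι ι ℝ) ε ≤ M := by
    cases isEmpty_or_nonempty ι
    · exact ⟨1, one_pos, le_of_eq (Subsingleton.elim _ _)⟩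
    · exact (CFC.exists_pos_algebraMap_le_iff hM.isHermitian).2
        fun _ hx => hM.isStrictlyPositive.spectrum_pos hx
  refine ⟨ε, hε, fun x => ?_⟩
  simpa [sub_mulVec, Algebra.algebraMap_eq_smul_one, smul_mulVec] using
    (Matrix.le_iff.1 hεM).dotProduct_mulVec_nonneg x

lemma tendsto_zero_of_summable_dotProduct_self {x : ℕ → ι → ℝ}
    (hx : Summable fun k => x k ⬝ᵥ x k) : Tendsto x atTop (𝓝 0) := by
  refine squeeze_zero_norm (fun k => (pi_norm_le_iff_of_nonneg (Real.sqrt_nonneg _)).2 fun i => ?_)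
    (by simpa using hx.tendsto_atTop_zero.sqrt)
  exact Real.abs_le_sqrt (sq_le_dotProduct_self (x k) i)

lemma sector_quadForm_nonneg [DecidableEq ι] {γ : ℝ} {u v : ι → ℝ}
    (h : u ⬝ᵥ u ≤ γ ^ 2 * (v ⬝ᵥ v)) :
    0 ≤ (u ⊕ᵥ v) ⬝ᵥ fromBlocks ((-2 : ℝ) • 1) 0 0 ((2 * γ ^ 2) • 1) *ᵥ (u ⊕ᵥ v) := by
  simp only [fromBlocks_mulVec, Sum.elim_comp_inl, Sum.elim_comp_inr, zero_mulVec, add_zero,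
    zero_add, smul_mulVec, one_mulVec, sumElim_dotProduct_sumElim, dotProduct_smul, smul_eq_mul]
  linarith

lemma dotProduct_transpose_mul_mul_mulVec {κ : Type*} [Fintype κ] (M : Matrix κ ι ℝ)
    (N : Matrix κ κ ℝ) (x : ι → ℝ) :
    x ⬝ᵥ (Mᵀ * N * M) *ᵥ x = (M *ᵥ x) ⬝ᵥ N *ᵥ (M *ᵥ x) := by
  rw [Matrix.mul_assoc, ← mulVec_mulVec, dotProduct_mulVec, vecMul_transpose, ← mulVec_mulVec]

end DotProduct

lemma summable_of_le_sub_succ {V f : ℕ → ℝ} (hV : ∀ k, 0 ≤ V k) (hf : ∀ k, 0 ≤ f k)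
    (h : ∀ k, f k ≤ V k - V (k + 1)) : Summable f :=
  summable_of_sum_range_le hf fun N => by
    have := Finset.sum_le_sum fun k (_ : k ∈ Finset.range N) => h k
    rw [Finset.sum_range_sub'] at this
    linarith [hV N]

lemma summable_and_tsum_le_of_dissipation {V s e r : ℕ → ℝ} {ε C : ℝ} (hε : 0 < ε)
    (hC : 0 ≤ C) (hV : ∀ k, 0 ≤ V k) (hV0 : V 0 = 0) (hr : Summable r) (hr0 : ∀ k, 0 ≤ r k)
    (hre : ∀ k, r k ≤ e k) (hdiss : ∀ k, V (k + 1) - V k + s k ≤ -ε * e k)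
    (hs : ∀ k, -(ε / 2 * e k + C * r k) ≤ s k) :
    Summable s ∧ ∑' k, s k ≤ -ε * ∑' k, r k := by
  have hsum (N : ℕ) : V N + ∑ k ∈ Finset.range N, s k ≤ -ε * ∑ k ∈ Finset.range N, e k := by
    have := Finset.sum_le_sum fun k (_ : k ∈ Finset.range N) => hdiss k
    rw [Finset.sum_add_distrib, Finset.sum_range_sub, ← Finset.mul_sum, hV0] at this
    linarith
  have hrN (N : ℕ) : C * ∑ k ∈ Finset.range N, r k ≤ C * ∑' k, r k :=
    mul_le_mul_of_nonneg_left (hr.sum_le_tsum _ fun k _ => hr0 k) hC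
  have he : Summable e := by
    refine summable_of_sum_range_le (c := 2 / ε * (C * ∑' k, r k))
      (fun k => (hr0 k).trans (hre k)) fun N => ?_
    have := Finset.sum_le_sum fun k (_ : k ∈ Finset.range N) => hs k
    simp only [Finset.sum_neg_distrib, Finset.sum_add_distrib, ← Finset.mul_sum] at this
    rw [div_mul_eq_mul_div, le_div_iff₀ hε]
    linarith [hsum N, hV N, hrN N]
  have hg : Summable fun k => s k + (ε / 2 * e k + C * r k) := by
    refine summable_of_sum_range_le (c := C * ∑' k, r k)
      (fun k => by linarith [hs k]) fun N => ?_
    have he0 : 0 ≤ ∑ k ∈ Finset.range N, e k :=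
      Finset.sum_nonneg fun k _ => (hr0 k).trans (hre k)
    simp only [Finset.sum_add_distrib, ← Finset.mul_sum]
    nlinarith [hsum N, hV N, hrN N]
  have hs' : Summable s := by
    simpa using hg.sub ((he.mul_left (ε / 2)).add (hr.mul_left C))
  refine ⟨hs', le_of_tendsto_of_tendsto' hs'.hasSum.tendsto_sum_nat
    (hr.hasSum.tendsto_sum_nat.const_mul (-ε)) fun N => ?_⟩
  have := Finset.sum_le_sum fun k (_ : k ∈ Finset.range N) => hre k
  nlinarith [hsum N, hV N]

section LiftedSystem

variable {n₁ n₂ m q : ℕ} (T : ℕ) (A : Matrix (Fin n₁ ⊕ Fin n₂) (Fin n₁ ⊕ Fin n₂) ℝ)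
  (B : Matrix (Fin n₁ ⊕ Fin n₂) (Fin m) ℝ) (C : Matrix (Fin q) (Fin n₁ ⊕ Fin n₂) ℝ)
  (D : Matrix (Fin q) (Fin m) ℝ) (Q : Matrix (Fin m) (Fin m) ℝ) (S : Matrix (Fin m) (Fin q) ℝ)
  (R : Matrix (Fin q) (Fin q) ℝ)

lemma dotProduct_Ltil_mulVec (Pu : Matrix (Fin n₂ ⊕ Fin n₂) (Fin n₂ ⊕ Fin n₂) ℝ)
    (X : Matrix (Fin n₁ ⊕ Fin n₂) (Fin n₁ ⊕ Fin n₂) ℝ) (τ : ℝ)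
    (η : Fin n₁ ⊕ Fin n₂ → ℝ) (w : Fin T × Fin m → ℝ) (u : Fin n₂ → ℝ) :
    (η ⊕ᵥ (w ⊕ᵥ u)) ⬝ᵥ Ltil T A B C D Q S R Pu X τ *ᵥ (η ⊕ᵥ (w ⊕ᵥ u)) =
      -(η ⬝ᵥ X *ᵥ η) +
        (A ^ T *ᵥ η + Btil T A B *ᵥ w + Butil T A *ᵥ u) ⬝ᵥ
          X *ᵥ (A ^ T *ᵥ η + Btil T A B *ᵥ w + Butil T A *ᵥ u) +
      (w ⊕ᵥ (Ctil T A C *ᵥ η + Dtil T A B C D *ᵥ w + Dutil T A C *ᵥ u)) ⬝ᵥ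
        Ptil T Q S R *ᵥ (w ⊕ᵥ (Ctil T A C *ᵥ η + Dtil T A B C D *ᵥ w + Dutil T A C *ᵥ u)) +
      τ * ((u ⊕ᵥ Cu n₁ n₂ *ᵥ η) ⬝ᵥ Pu *ᵥ (u ⊕ᵥ Cu n₁ n₂ *ᵥ η)) := by
  rw [Ltil, add_mulVec, add_mulVec, dotProduct_add, dotProduct_add,
    dotProduct_transpose_mul_mul_mulVec, dotProduct_transpose_mul_mul_mulVec,
    dotProduct_transpose_mul_mul_mulVec]
  simp only [fromBlocks_mulVec, Sum.elim_comp_inl, Sum.elim_comp_inr, fromCols_mulVec_sumElim,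
    one_mulVec, zero_mulVec, add_zero, zero_add, sumElim_dotProduct_sumElim,
    neg_mulVec, dotProduct_neg, smul_mulVec, dotProduct_smul, smul_eq_mul, add_assoc]

variable {R} in
lemma Ptil_quadForm_inr_nonneg (hR : R.PosSemidef) (z : Fin T × Fin q → ℝ) :
    0 ≤ (0 ⊕ᵥ z) ⬝ᵥ Ptil T Q S R *ᵥ (0 ⊕ᵥ z) := by
  have := (PosSemidef.one.kronecker hR : ((1 : Matrix (Fin T) (Fin T) ℝ) ⊗ₖ R).PosSemidef)
    |>.dotProduct_mulVec_nonneg z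
  simpa [Ptil, fromBlocks_mulVec, sumElim_dotProduct_sumElim] using this

variable {R} in
lemma exists_neg_le_supply (hR : R.PosSemidef) {δ : ℝ} (hδ : 0 < δ) :
    ∃ K ≥ 0, ∀ (η : Fin n₁ ⊕ Fin n₂ → ℝ) (w : Fin T × Fin m → ℝ) (u : Fin n₂ → ℝ),
      -(δ * ((η ⊕ᵥ (w ⊕ᵥ u)) ⬝ᵥ (η ⊕ᵥ (w ⊕ᵥ u))) + K * (w ⬝ᵥ w)) ≤
        (w ⊕ᵥ (Ctil T A C *ᵥ η + Dtil T A B C D *ᵥ w + Dutil T A C *ᵥ u)) ⬝ᵥ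
          Ptil T Q S R *ᵥ (w ⊕ᵥ (Ctil T A C *ᵥ η + Dtil T A B C D *ᵥ w + Dutil T A C *ᵥ u)) := by
  set M := fromBlocks 0 (fromCols (1 : Matrix (Fin T × Fin m) (Fin T × Fin m) ℝ) 0) (Ctil T A C)
    (fromCols (Dtil T A B C D) (Dutil T A C))
  have hM (η : Fin n₁ ⊕ Fin n₂ → ℝ) (w : Fin T × Fin m → ℝ) (u : Fin n₂ → ℝ) :
      M *ᵥ (η ⊕ᵥ (w ⊕ᵥ u)) = w ⊕ᵥ (Ctil T A C *ᵥ η + Dtil T A B C D *ᵥ w + Dutil T A C *ᵥ u) := by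
    simp [M, fromBlocks_mulVec, add_assoc]
  obtain ⟨K, hK, hlow⟩ := exists_neg_le_dotProduct_add_mulVec_add (Mᵀ * Ptil T Q S R * M) hδ
  refine ⟨K, hK, fun η w u => ?_⟩
  -- split off the input: the remaining part only sees the `R`-block of `P̃`
  have hsplit : η ⊕ᵥ (w ⊕ᵥ u) = (η ⊕ᵥ (0 ⊕ᵥ u)) + ((0 : Fin n₁ ⊕ Fin n₂ → ℝ) ⊕ᵥ (w ⊕ᵥ 0)) := by
    ext (i | i | i) <;> simp
  have ha : 0 ≤ (η ⊕ᵥ (0 ⊕ᵥ u)) ⬝ᵥ (Mᵀ * Ptil T Q S R * M) *ᵥ (η ⊕ᵥ (0 ⊕ᵥ u)) := by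
    rw [dotProduct_transpose_mul_mul_mulVec, hM, mulVec_zero, add_zero]
    exact Ptil_quadForm_inr_nonneg T Q S hR _
  have h := hlow _ ((0 : Fin n₁ ⊕ Fin n₂ → ℝ) ⊕ᵥ (w ⊕ᵥ 0)) ha
  rw [← hsplit, dotProduct_transpose_mul_mul_mulVec, hM] at h
  simp only [sumElim_dotProduct_sumElim, dotProduct_zero, zero_add, add_zero] at h ⊢
  nlinarith [mul_nonneg hδ.le (dotProduct_self_nonneg w)]

lemma PerturbedTraj.dissipation {Δ : ℕ → (Fin n₂ → ℝ) → (Fin n₂ → ℝ)}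
    {η : ℕ → Fin n₁ ⊕ Fin n₂ → ℝ} {w : ℕ → Fin T × Fin m → ℝ} {z : ℕ → Fin T × Fin q → ℝ}
    (htr : PerturbedTraj T A B C D Δ η w z) {X : Matrix (Fin n₁ ⊕ Fin n₂) (Fin n₁ ⊕ Fin n₂) ℝ}
    {γ τ ε : ℝ} (hτ : 0 ≤ τ)
    (hL : ∀ ζ, ε * (ζ ⬝ᵥ ζ) ≤ ζ ⬝ᵥ -Ltil T A B C D Q S R
      (fromBlocks ((-2 : ℝ) • 1) 0 0 ((2 * γ ^ 2) • 1)) X τ *ᵥ ζ)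
    (hΔ : ∀ k v, Δ k v ⬝ᵥ Δ k v ≤ γ ^ 2 * (v ⬝ᵥ v)) (k : ℕ) :
    η (k + 1) ⬝ᵥ X *ᵥ η (k + 1) - η k ⬝ᵥ X *ᵥ η k + (w k ⊕ᵥ z k) ⬝ᵥ Ptil T Q S R *ᵥ (w k ⊕ᵥ z k) ≤
      -ε * ((η k ⊕ᵥ (w k ⊕ᵥ Δ k (Cu n₁ n₂ *ᵥ η k))) ⬝ᵥ (η k ⊕ᵥ (w k ⊕ᵥ Δ k (Cu n₁ n₂ *ᵥ η k)))) := by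
  have h := hL (η k ⊕ᵥ (w k ⊕ᵥ Δ k (Cu n₁ n₂ *ᵥ η k)))
  rw [neg_mulVec, dotProduct_neg, dotProduct_Ltil_mulVec, ← (htr k).1, ← (htr k).2] at h
  have := mul_nonneg hτ (sector_quadForm_nonneg (hΔ k (Cu n₁ n₂ *ᵥ η k)))
  linarith

end LiftedSystem

theorem robust_quadperf_bootstrapping_general {n₁ n₂ m q : ℕ} (T : ℕ)
    (A : Matrix (Fin n₁ ⊕ Fin n₂) (Fin n₁ ⊕ Fin n₂) ℝ)
    (B : Matrix (Fin n₁ ⊕ Fin n₂) (Fin m) ℝ)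
    (C : Matrix (Fin q) (Fin n₁ ⊕ Fin n₂) ℝ) (D : Matrix (Fin q) (Fin m) ℝ)
    (Q : Matrix (Fin m) (Fin m) ℝ) (S : Matrix (Fin m) (Fin q) ℝ)
    (R : Matrix (Fin q) (Fin q) ℝ)
    (hRpsd : R.PosSemidef) (γ : ℝ)
    (hLMI : ∃ (X : Matrix (Fin n₁ ⊕ Fin n₂) (Fin n₁ ⊕ Fin n₂) ℝ) (τ : ℝ),
      X.IsSymm ∧ X.PosDef ∧ 0 < τ ∧
      (-(Ltil T A B C D Q S R
          (Matrix.fromBlocks ((-2 : ℝ) • 1) 0 0 ((2 * γ ^ 2) • 1)) X τ)).PosDef) :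
    ∃ ε > (0 : ℝ), ∀ Δ : ℕ → (Fin n₂ → ℝ) → (Fin n₂ → ℝ),
      (∀ (k : ℕ) (v : Fin n₂ → ℝ),
        Real.sqrt (Δ k v ⬝ᵥ Δ k v) ≤ γ * Real.sqrt (v ⬝ᵥ v)) →
      ((∀ η z, PerturbedTraj T A B C D Δ η (fun _ => 0) z →
          Tendsto η atTop (𝓝 0)) ∧
       (∀ η w z, PerturbedTraj T A B C D Δ η w z → η 0 = 0 →
          Summable (fun k => w k ⬝ᵥ w k) →
          ∃ l : ℝ,
            Tendsto (fun N => ∑ k ∈ Finset.range N,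
              Sum.elim (w k) (z k) ⬝ᵥ
                (Ptil T Q S R).mulVec (Sum.elim (w k) (z k))) atTop (𝓝 l) ∧
            l ≤ -ε * ∑' k, w k ⬝ᵥ w k)) := by
  obtain ⟨X, τ, -, hX, hτ, hL⟩ := hLMI
  obtain ⟨ε, hε, hLε⟩ := hL.exists_pos_mul_dotProduct_self_le
  obtain ⟨K, hK, hsupply⟩ := exists_neg_le_supply T A B C D Q S hRpsd (half_pos hε)
  refine ⟨ε, hε, fun Δ hΔ => ?_⟩
  have hsector (k : ℕ) (v : Fin n₂ → ℝ) : Δ k v ⬝ᵥ Δ k v ≤ γ ^ 2 * (v ⬝ᵥ v) := by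
    have := pow_le_pow_left₀ (Real.sqrt_nonneg _) (hΔ k v) 2
    rwa [mul_pow, Real.sq_sqrt (dotProduct_self_nonneg _),
      Real.sq_sqrt (dotProduct_self_nonneg _)] at this
  have hV (x : Fin n₁ ⊕ Fin n₂ → ℝ) : 0 ≤ x ⬝ᵥ X *ᵥ x := by
    simpa using hX.posSemidef.dotProduct_mulVec_nonneg x
  refine ⟨fun η z htr => ?_, fun η w z htr hη0 hw => ?_⟩
  · refine tendsto_zero_of_summable_dotProduct_self <| (summable_mul_left_iff hε.ne').1 <|
      summable_of_le_sub_succ (fun k => hV (η k))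
        (fun k => mul_nonneg hε.le (dotProduct_self_nonneg _)) fun k => ?_
    have hdiss := htr.dissipation T A B C D Q S R hτ.le hLε hsector k
    have hz := Ptil_quadForm_inr_nonneg T Q S hRpsd (z k)
    simp only [sumElim_dotProduct_sumElim, zero_dotProduct, zero_add] at hdiss
    nlinarith [dotProduct_self_nonneg (Δ k (Cu n₁ n₂ *ᵥ η k))]
  · obtain ⟨hs, hle⟩ := summable_and_tsum_le_of_dissipation hε hK (fun k => hV (η k))
      (by simp [hη0]) hw (fun k => dotProduct_self_nonneg _)
      (fun k => by
        simp only [sumElim_dotProduct_sumElim]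
        linarith [dotProduct_self_nonneg (η k), dotProduct_self_nonneg (Δ k (Cu n₁ n₂ *ᵥ η k))])
      (htr.dissipation T A B C D Q S R hτ.le hLε hsector)
      fun k => (htr k).2 ▸ hsupply (η k) (w k) (Δ k (Cu n₁ n₂ *ᵥ η k))
    exact ⟨_, hs.hasSum.tendsto_sum_nat, hle⟩

/-- If `R ⪰ 0`, `γ ≥ 0`, and the robust LMI `L̃(X, τ) ≺ 0` with the bootstrapping
multiplier `P_u = diag(-2I, 2γ²I)` is feasible for some symmetric `X ≻ 0` and `τ > 0`,
then the perturbed lifted closed loop satisfies robust quadratic performance specified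
by `P̃`, with a margin `ε > 0` independent of the sector-bounded uncertainties `Δ_k`. -/
theorem robust_quadperf_bootstrapping {n₁ n₂ m q : ℕ} (T : ℕ) (hT : 1 ≤ T)
    (A : Matrix (Fin n₁ ⊕ Fin n₂) (Fin n₁ ⊕ Fin n₂) ℝ)
    (B : Matrix (Fin n₁ ⊕ Fin n₂) (Fin m) ℝ)
    (C : Matrix (Fin q) (Fin n₁ ⊕ Fin n₂) ℝ) (D : Matrix (Fin q) (Fin m) ℝ)
    (Q : Matrix (Fin m) (Fin m) ℝ) (S : Matrix (Fin m) (Fin q) ℝ)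
    (R : Matrix (Fin q) (Fin q) ℝ) (hQ : Q.IsSymm) (hR : R.IsSymm)
    (hRpsd : R.PosSemidef) (γ : ℝ) (hγ : 0 ≤ γ)
    (hLMI : ∃ (X : Matrix (Fin n₁ ⊕ Fin n₂) (Fin n₁ ⊕ Fin n₂) ℝ) (τ : ℝ),
      X.IsSymm ∧ X.PosDef ∧ 0 < τ ∧
      (-(Ltil T A B C D Q S R
          (Matrix.fromBlocks ((-2 : ℝ) • 1) 0 0 ((2 * γ ^ 2) • 1)) X τ)).PosDef) :
    ∃ ε > (0 : ℝ), ∀ Δ : ℕ → (Fin n₂ → ℝ) → (Fin n₂ → ℝ),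
      (∀ (k : ℕ) (v : Fin n₂ → ℝ),
        Real.sqrt (Δ k v ⬝ᵥ Δ k v) ≤ γ * Real.sqrt (v ⬝ᵥ v)) →
      ((∀ η z, PerturbedTraj T A B C D Δ η (fun _ => 0) z →
          Tendsto η atTop (𝓝 0)) ∧
       (∀ η w z, PerturbedTraj T A B C D Δ η w z → η 0 = 0 →
          Summable (fun k => w k ⬝ᵥ w k) →
          ∃ l : ℝ,
            Tendsto (fun N => ∑ k ∈ Finset.range N,
              Sum.elim (w k) (z k) ⬝ᵥ
                (Ptil T Q S R).mulVec (Sum.elim (w k) (z k))) atTop (𝓝 l) ∧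
            l ≤ -ε * ∑' k, w k ⬝ᵥ w k)) :=
  robust_quadperf_bootstrapping_general T A B C D Q S R hRpsd γ hLMI
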